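/- (Converse core inequality for CR source coding) Let X^n be i.i.d. with law P_X and let (S_e^n, S_d^n) be generated from (X^n, A^n) by a memoryless channel P_{S_e,S_d|X,A} where A^n is any function of X^n. Then H(X^n, S_e^n) − H(X^n, S_e^n | A^n) + H(X^n, S_e^n | A^n, S_d^n) ≥ ∑_{i=1}^n [I(X_i; A_i) + H(X_i, S_{e,i} | A_i, S_{d,i})]. -/

import Mathlib

open Finset
noncomputable section
namespace IT

variable {Ω : Type} [Fintype Ω]

/-- Marginal probability mass of the event `X = a` under the weight function `p`. -/
def marg {α : Type} [Fintype α] [DecidableEq α]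
    (p : Ω → ℝ) (X : Ω → α) (a : α) : ℝ :=
  ∑ ω, if X ω = a then p ω else 0

/-- Shannon entropy (natural logarithm) of the random variable `X`. -/
def ent {α : Type} [Fintype α] [DecidableEq α] (p : Ω → ℝ) (X : Ω → α) : ℝ :=
  ∑ a, Real.negMulLog (marg p X a)

/-- Conditional entropy `H(X | Y)`. -/
def condEnt {α β : Type} [Fintype α] [DecidableEq α] [Fintype β] [DecidableEq β]
    (p : Ω → ℝ) (X : Ω → α) (Y : Ω → β) : ℝ :=
  ent p (fun ω => (X ω, Y ω)) - ent p Y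

/-- Mutual information `I(X; Y)`. -/
def mi {α β : Type} [Fintype α] [DecidableEq α] [Fintype β] [DecidableEq β]
    (p : Ω → ℝ) (X : Ω → α) (Y : Ω → β) : ℝ :=
  ent p X + ent p Y - ent p (fun ω => (X ω, Y ω))

/-- Conditional mutual information `I(X; Y | Z)`. -/
def condMI {α β γ : Type} [Fintype α] [DecidableEq α] [Fintype β] [DecidableEq β]
    [Fintype γ] [DecidableEq γ]
    (p : Ω → ℝ) (X : Ω → α) (Y : Ω → β) (Z : Ω → γ) : ℝ :=
  condEnt p X Z + condEnt p Y Z - condEnt p (fun ω => (X ω, Y ω)) Z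

/-- `X` and `Y` are conditionally independent given `Z`:
`P(X=a, Z=c) ⬝ P(Y=b, Z=c) = P(X=a, Y=b, Z=c) ⬝ P(Z=c)`. -/
def CondIndep {α β γ : Type} [Fintype α] [DecidableEq α] [Fintype β] [DecidableEq β]
    [Fintype γ] [DecidableEq γ]
    (p : Ω → ℝ) (X : Ω → α) (Y : Ω → β) (Z : Ω → γ) : Prop :=
  ∀ a b c,
    marg p (fun ω => (X ω, Z ω)) (a, c) * marg p (fun ω => (Y ω, Z ω)) (b, c) =
    marg p (fun ω => (X ω, Y ω, Z ω)) (a, b, c) * marg p Z c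

/-- `p` is a probability mass function on `Ω`. -/
def IsProb (p : Ω → ℝ) : Prop := (∀ ω, 0 ≤ p ω) ∧ ∑ ω, p ω = 1

end IT

/-! Since `A` is a function of `X`, the left side equals `H(A) + H(X,S_e,A,S_d) - H(A,S_d)`.
Writing each entropy as `-∑ ω, p ω * log P(value at ω)`, identities between entropies follow from
pointwise identities between likelihoods on the support of `p`: the memoryless channel gives
`P(x,a,s) = P(x,a) ∏ P(x_i,a_i,s_i) / P(x_i,a_i)`, and the i.i.d. source gives `P(x) = ∏ P(x_i)`,
so `H(X,A) = H(X) = ∑ H(X_i)`. Gibbs' inequality against the sub-probability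
`P(a) ∏ P(a_i,d_i) / P(a_i)` bounds the remaining term:
`H(A,S_d) - H(A) ≤ ∑ (H(A_i,S_{d,i}) - H(A_i))`. -/

open Real

namespace IT

variable {Ω : Type} [Fintype Ω] {p : Ω → ℝ}
  {α β : Type} [Fintype α] [DecidableEq α] [Fintype β] [DecidableEq β]

theorem sum_mul_comp_eq_sum_marg_mul (Y : Ω → α) (F : α → ℝ) :
    ∑ ω, p ω * F (Y ω) = ∑ a, marg p Y a * F a := by
  simp only [marg, Finset.sum_mul, ite_mul, zero_mul]
  rw [Finset.sum_comm]
  simp only [Finset.sum_ite_eq, Finset.mem_univ, if_true]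

theorem sum_marg (Y : Ω → α) : ∑ a, marg p Y a = ∑ ω, p ω := by
  simpa using (sum_mul_comp_eq_sum_marg_mul (p := p) Y fun _ => 1).symm

theorem sum_marg_pair (Y : Ω → α) (Z : Ω → β) (a : α) :
    ∑ b, marg p (fun ω => (Y ω, Z ω)) (a, b) = marg p Y a := by
  simp only [marg, Prod.mk.injEq, ite_and]
  rw [Finset.sum_comm]
  simp

theorem marg_comp (Y : Ω → α) (g : α → β) (b : β) :
    marg p (fun ω => g (Y ω)) b = ∑ a with g a = b, marg p Y a := by
  have := sum_mul_comp_eq_sum_marg_mul (p := p) Y fun a => if g a = b then 1 else 0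
  simpa [marg, Finset.sum_filter, mul_ite] using this

theorem marg_comp_of_injective (Y : Ω → α) {g : α → β} (hg : Function.Injective g) (a : α) :
    marg p (fun ω => g (Y ω)) (g a) = marg p Y a := by
  simp only [marg, hg.eq_iff]

theorem marg_nonneg (hp : ∀ ω, 0 ≤ p ω) (Y : Ω → α) (a : α) : 0 ≤ marg p Y a :=
  Finset.sum_nonneg fun ω _ => ite_nonneg (hp ω) le_rfl

theorem marg_pos (hp : ∀ ω, 0 ≤ p ω) (Y : Ω → α) {ω : Ω} (hω : p ω ≠ 0) :
    0 < marg p Y (Y ω) := by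
  refine ((hp ω).lt_of_ne' hω).trans_le ?_
  simpa [marg] using Finset.single_le_sum (f := fun ω' => if Y ω' = Y ω then p ω' else 0)
    (fun ω' _ => ite_nonneg (hp ω') le_rfl) (Finset.mem_univ ω)

theorem ent_eq_neg_sum_mul_log (Y : Ω → α) :
    ent p Y = -∑ ω, p ω * log (marg p Y (Y ω)) := by
  rw [sum_mul_comp_eq_sum_marg_mul Y fun a => log (marg p Y a), ent, ← Finset.sum_neg_distrib]
  simp only [negMulLog, neg_mul]

theorem ent_comp_of_injective (Y : Ω → α) {g : α → β} (hg : Function.Injective g) :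
    ent p (fun ω => g (Y ω)) = ent p Y := by
  simp only [ent_eq_neg_sum_mul_log, marg_comp_of_injective Y hg]

theorem ent_pair_eq_of_eq_comp {Y : Ω → α} {Z : Ω → β} {g : α → β} (hZ : ∀ ω, Z ω = g (Y ω)) :
    ent p (fun ω => (Y ω, Z ω)) = ent p Y := by
  simp only [hZ]
  exact ent_comp_of_injective Y (g := fun a => (a, g a)) fun a b h => congrArg Prod.fst h

theorem neg_sum_mul_log_prod_marg (hp : ∀ ω, 0 ≤ p ω) {ι : Type} [Fintype ι] (W : ι → Ω → α) :
    -∑ ω, p ω * log (∏ i, marg p (W i) (W i ω)) = ∑ i, ent p (W i) := by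
  have hlog : ∀ ω, p ω * log (∏ i, marg p (W i) (W i ω))
      = ∑ i, p ω * log (marg p (W i) (W i ω)) := by
    intro ω
    by_cases hω : p ω = 0
    · simp [hω]
    rw [log_prod fun i _ => (marg_pos hp (W i) hω).ne', Finset.mul_sum]
  simp only [hlog, ent_eq_neg_sum_mul_log]
  rw [Finset.sum_comm, Finset.sum_neg_distrib]

theorem neg_sum_mul_log_marg_mul_prod_div {γ : Type} [Fintype γ] [DecidableEq γ]
    (hp : ∀ ω, 0 ≤ p ω) {ι : Type} [Fintype ι]
    (U : Ω → α) (W : ι → Ω → β) (V : ι → Ω → γ) :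
    -∑ ω, p ω * log (marg p U (U ω) * ∏ i, marg p (W i) (W i ω) / marg p (V i) (V i ω))
      = ent p U + ∑ i, (ent p (W i) - ent p (V i)) := by
  have hlog : ∀ ω, p ω * log (marg p U (U ω) * ∏ i, marg p (W i) (W i ω) / marg p (V i) (V i ω))
      = p ω * log (marg p U (U ω)) + p ω * log (∏ i, marg p (W i) (W i ω))
        - p ω * log (∏ i, marg p (V i) (V i ω)) := by
    intro ω
    by_cases hω : p ω = 0
    · simp [hω]
    have hW := Finset.prod_pos fun i (_ : i ∈ Finset.univ) => marg_pos hp (W i) hω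
    have hV := Finset.prod_pos fun i (_ : i ∈ Finset.univ) => marg_pos hp (V i) hω
    rw [Finset.prod_div_distrib, log_mul (marg_pos hp U hω).ne' (div_pos hW hV).ne',
      log_div hW.ne' hV.ne']
    ring
  simp only [hlog, Finset.sum_add_distrib, Finset.sum_sub_distrib]
  rw [ent_eq_neg_sum_mul_log U, ← neg_sum_mul_log_prod_marg hp W,
    ← neg_sum_mul_log_prod_marg hp V]
  ring

theorem ent_le_neg_sum_mul_log (hp : IsProb p) (Y : Ω → α) {q : α → ℝ} (hq0 : ∀ a, 0 ≤ q a)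
    (hq1 : ∑ a, q a ≤ 1) (hqpos : ∀ ω, p ω ≠ 0 → 0 < q (Y ω)) :
    ent p Y ≤ -∑ ω, p ω * log (q (Y ω)) := by
  obtain ⟨hp0, hp1⟩ := hp
  set m := marg p Y
  have hpoint : ∀ ω, p ω * log (q (Y ω)) - p ω * log (m (Y ω))
      ≤ p ω * (q (Y ω) / m (Y ω) - 1) := by
    intro ω
    by_cases hω : p ω = 0
    · simp [hω]
    have hm := marg_pos hp0 Y hω
    rw [← mul_sub, ← log_div (hqpos ω hω).ne' hm.ne']
    exact mul_le_mul_of_nonneg_left (log_le_sub_one_of_pos (div_pos (hqpos ω hω) hm)) (hp0 ω)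
  have hmq : ∀ a, m a * (q a / m a) ≤ q a := by
    intro a
    by_cases ha : m a = 0
    · simp [ha, hq0 a]
    · rw [mul_div_cancel₀ _ ha]
  have hsum : ∑ ω, p ω * (q (Y ω) / m (Y ω) - 1) ≤ 0 := by
    rw [sum_mul_comp_eq_sum_marg_mul Y fun a => q a / m a - 1]
    calc ∑ a, m a * (q a / m a - 1) = ∑ a, m a * (q a / m a) - ∑ a, m a := by
          simp only [mul_sub, mul_one, Finset.sum_sub_distrib]
      _ ≤ ∑ a, q a - 1 := by
          rw [sum_marg, hp1]
          gcongr with a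
          exact hmq a
      _ ≤ 0 := by linarith
  have := Finset.sum_le_sum fun ω (_ : ω ∈ Finset.univ) => hpoint ω
  rw [Finset.sum_sub_distrib] at this
  rw [ent_eq_neg_sum_mul_log]
  linarith

theorem ent_pair_le_add_sum {ι : Type} [Fintype ι] [DecidableEq ι] (hp : IsProb p)
    (A : Ω → ι → α) (D : Ω → ι → β) :
    ent p (fun ω => (A ω, D ω))
      ≤ ent p A + ∑ i, (ent p (fun ω => (A ω i, D ω i)) - ent p (fun ω => A ω i)) := by
  obtain ⟨hp0, hp1⟩ := hp
  have hr0 : ∀ i a d, 0 ≤ marg p (fun ω => (A ω i, D ω i)) (a, d) / marg p (fun ω => A ω i) a :=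
    fun i a d => div_nonneg (marg_nonneg hp0 _ _) (marg_nonneg hp0 _ _)
  have hr1 : ∀ i a,
      ∑ d, marg p (fun ω => (A ω i, D ω i)) (a, d) / marg p (fun ω => A ω i) a ≤ 1 := fun i a => by
      rw [← Finset.sum_div, sum_marg_pair]
      exact div_self_le_one _
  rw [← neg_sum_mul_log_marg_mul_prod_div hp0 A (fun i ω => (A ω i, D ω i)) (fun i ω => A ω i)]
  refine ent_le_neg_sum_mul_log ⟨hp0, hp1⟩ (fun ω => (A ω, D ω))
    (q := fun y => marg p A y.1 * ∏ i,
      marg p (fun ω => (A ω i, D ω i)) (y.1 i, y.2 i) / marg p (fun ω => A ω i) (y.1 i))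
    (fun y => mul_nonneg (marg_nonneg hp0 _ _) (Finset.prod_nonneg fun i _ => hr0 i _ _))
    ?_ fun ω hω => mul_pos (marg_pos hp0 A hω) (Finset.prod_pos fun i _ =>
      div_pos (marg_pos hp0 (fun ω => (A ω i, D ω i)) hω) (marg_pos hp0 (fun ω => A ω i) hω))
  calc ∑ y : (ι → α) × (ι → β), marg p A y.1 * ∏ i,
        marg p (fun ω => (A ω i, D ω i)) (y.1 i, y.2 i) / marg p (fun ω => A ω i) (y.1 i)
      = ∑ a, marg p A a * ∏ i, ∑ d,
          marg p (fun ω => (A ω i, D ω i)) (a i, d) / marg p (fun ω => A ω i) (a i) := by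
        simp only [Fintype.sum_prod_type, ← Finset.mul_sum, Fintype.prod_sum]
    _ ≤ ∑ a, marg p A a := by
        gcongr with a
        exact mul_le_of_le_one_right (marg_nonneg hp0 _ _)
          (Finset.prod_le_one (fun i _ => Finset.sum_nonneg fun d _ => hr0 i _ d)
            fun i _ => hr1 i _)
    _ = 1 := by rw [sum_marg, hp1]

section Memoryless

variable {ι σ : Type} [Fintype ι] [DecidableEq ι] [Fintype σ] [DecidableEq σ]

theorem sum_pi_ite_apply_eq_prod (f : ι → σ → ℝ) (i : ι) (c : σ) :
    ∑ s : ι → σ, (if s i = c then ∏ j, f j (s j) else 0)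
      = f i c * ∏ j ∈ Finset.univ.erase i, ∑ x, f j x := by
  let f' := Function.update f i fun x => if x = c then f i x else 0
  have hprod : ∀ s : ι → σ, ∏ j, f' j (s j) = if s i = c then ∏ j, f j (s j) else 0 := by
    intro s
    split_ifs with hs
    · refine Finset.prod_congr rfl fun j _ => ?_
      by_cases hj : j = i
      · subst hj; simp [f', hs]
      · simp [f', hj]
    · exact Finset.prod_eq_zero (Finset.mem_univ i) (by simp [f', hs])
  have hsum : ∀ j, ∑ x, f' j x = Function.update (fun j => ∑ x, f j x) i (f i c) j := by
    intro j
    by_cases hj : j = i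
    · subst hj; simp [f']
    · simp [f', hj]
  simp only [← hprod, ← Fintype.prod_sum, hsum,
    Finset.prod_update_of_mem (Finset.mem_univ i), Finset.sdiff_singleton_eq_erase]

theorem marg_mul_prod_sum_eq_marg {U : Ω → β} {S : Ω → ι → σ} {κ : ι → β → σ → ℝ}
    (h : ∀ u s, marg p (fun ω => (U ω, S ω)) (u, s) = marg p U u * ∏ i, κ i u (s i))
    (u : β) : marg p U u * ∏ i, ∑ s, κ i u s = marg p U u :=
  calc marg p U u * ∏ i, ∑ s, κ i u s
      = ∑ s, marg p (fun ω => (U ω, S ω)) (u, s) := by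
        simp only [h, Fintype.prod_sum, Finset.mul_sum]
    _ = marg p U u := sum_marg_pair U S u

/-- The kernel `k` need not be normalised: the channel hypothesis only forces
`∏ i, ∑ s, k i (φ i u) s = 1` for inputs `u` of positive mass, hence the factor `∑ s, k i v s`. -/
theorem marg_single_mul_sum_eq {γ : Type} [Fintype γ] [DecidableEq γ]
    {U : Ω → β} {S : Ω → ι → σ} {φ : ι → β → γ} {k : ι → γ → σ → ℝ}
    (h : ∀ u s, marg p (fun ω => (U ω, S ω)) (u, s) = marg p U u * ∏ i, k i (φ i u) (s i))
    (i : ι) (v : γ) (c : σ) :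
    marg p (fun ω => (φ i (U ω), S ω i)) (v, c) * ∑ s, k i v s
      = k i v c * marg p (fun ω => φ i (U ω)) v := by
  have hjoint : marg p (fun ω => (φ i (U ω), S ω i)) (v, c) = ∑ u with φ i u = v,
      marg p U u * (k i v c * ∏ j ∈ Finset.univ.erase i, ∑ s, k j (φ j u) s) := by
    rw [marg_comp (fun ω => (U ω, S ω)) (fun y => (φ i y.1, y.2 i)), Finset.sum_filter,
      Fintype.sum_prod_type, Finset.sum_filter]
    refine Finset.sum_congr rfl fun u _ => ?_
    simp only [Prod.mk.injEq, h, ite_and]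
    split_ifs with hu
    · rw [← hu, ← sum_pi_ite_apply_eq_prod (fun j x => k j (φ j u) x), Finset.mul_sum]
      simp only [mul_ite, mul_zero]
    · simp
  rw [hjoint, marg_comp U (φ i), Finset.sum_mul, Finset.mul_sum]
  refine Finset.sum_congr rfl fun u hu => ?_
  rw [← (Finset.mem_filter.1 hu).2]
  calc marg p U u * (k i (φ i u) c * ∏ j ∈ Finset.univ.erase i, ∑ s, k j (φ j u) s)
        * ∑ s, k i (φ i u) s
      = k i (φ i u) c * (marg p U u * ∏ j, ∑ s, k j (φ j u) s) := by
        rw [← Finset.mul_prod_erase Finset.univ _ (Finset.mem_univ i)]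
        ring
    _ = k i (φ i u) c * marg p U u := by
        rw [marg_mul_prod_sum_eq_marg (κ := fun i u => k i (φ i u)) h]

theorem ent_pair_eq_add_sum_of_memoryless {γ : Type} [Fintype γ] [DecidableEq γ]
    (hp : ∀ ω, 0 ≤ p ω) {U : Ω → β} {S : Ω → ι → σ} {φ : ι → β → γ} {k : ι → γ → σ → ℝ}
    (h : ∀ u s, marg p (fun ω => (U ω, S ω)) (u, s) = marg p U u * ∏ i, k i (φ i u) (s i)) :
    ent p (fun ω => (U ω, S ω)) = ent p U
      + ∑ i, (ent p (fun ω => (φ i (U ω), S ω i)) - ent p (fun ω => φ i (U ω))) := by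
  rw [← neg_sum_mul_log_marg_mul_prod_div hp U (fun i ω => (φ i (U ω), S ω i))
    (fun i ω => φ i (U ω)), ent_eq_neg_sum_mul_log]
  congr 1
  refine Finset.sum_congr rfl fun ω _ => ?_
  by_cases hω : p ω = 0
  · simp [hω]
  have hk : ∀ i, k i (φ i (U ω)) (S ω i)
      = marg p (fun ω => (φ i (U ω), S ω i)) (φ i (U ω), S ω i)
          / marg p (fun ω => φ i (U ω)) (φ i (U ω)) * ∑ s, k i (φ i (U ω)) s := by
    intro i
    rw [div_mul_eq_mul_div, eq_div_iff (marg_pos hp (fun ω => φ i (U ω)) hω).ne',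
      marg_single_mul_sum_eq h]
  rw [h, Finset.prod_congr rfl fun i _ => hk i, Finset.prod_mul_distrib, mul_left_comm,
    marg_mul_prod_sum_eq_marg (κ := fun i u => k i (φ i u)) h, mul_comm (∏ i, _)]

end Memoryless

theorem marg_eq_prod_marg_of_eq_prod {ι : Type} [Fintype ι] [DecidableEq ι]
    (hp : ∑ ω, p ω = 1) (X : Ω → ι → α) (f : ι → α → ℝ)
    (h : ∀ x, marg p X x = ∏ i, f i (x i)) (x : ι → α) :
    marg p X x = ∏ i, marg p (fun ω => X ω i) (x i) := by
  have htotal : ∏ i, ∑ a, f i a = 1 := by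
    rw [Fintype.prod_sum, ← hp, ← sum_marg X]
    simp only [h]
  have hsingle : ∀ i a, marg p (fun ω => X ω i) a * ∑ a', f i a' = f i a := by
    intro i a
    rw [marg_comp X (fun x => x i), Finset.sum_filter]
    simp only [h]
    rw [sum_pi_ite_apply_eq_prod, mul_assoc, Finset.prod_erase_mul _ _ (Finset.mem_univ i),
      htotal, mul_one]
  calc marg p X x = ∏ i, marg p (fun ω => X ω i) (x i) * ∑ a, f i a := by
        simp only [h, hsingle]
    _ = ∏ i, marg p (fun ω => X ω i) (x i) := by
        rw [Finset.prod_mul_distrib, htotal, mul_one]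

theorem ent_eq_sum_ent_of_marg_eq_prod {ι : Type} [Fintype ι] [DecidableEq ι]
    (hp : IsProb p) (X : Ω → ι → α) (f : ι → α → ℝ) (h : ∀ x, marg p X x = ∏ i, f i (x i)) :
    ent p X = ∑ i, ent p (fun ω => X ω i) := by
  rw [← neg_sum_mul_log_prod_marg hp.1 fun i ω => X ω i, ent_eq_neg_sum_mul_log]
  simp only [marg_eq_prod_marg_of_eq_prod hp.2 X f h]

theorem ent_eq_add_sum_of_memoryless_channel {ι γ δ : Type} [Fintype ι] [DecidableEq ι]
    [Fintype γ] [DecidableEq γ] [Fintype δ] [DecidableEq δ] (hp : ∀ ω, 0 ≤ p ω)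
    {X : Ω → ι → α} {A : Ω → ι → β} {E : Ω → ι → γ} {D : Ω → ι → δ} {K : γ × δ → α → β → ℝ}
    (h : ∀ xs as es ds, marg p (fun ω => (X ω, A ω, E ω, D ω)) (xs, as, es, ds)
      = marg p (fun ω => (X ω, A ω)) (xs, as) * ∏ i, K (es i, ds i) (xs i) (as i)) :
    ent p (fun ω => ((X ω, E ω), (A ω, D ω))) = ent p (fun ω => (X ω, A ω))
      + ∑ i, (ent p (fun ω => ((X ω i, E ω i), (A ω i, D ω i)))
        - ent p (fun ω => (X ω i, A ω i))) := by
  have hzip : Function.Injective fun y : (ι → α) × (ι → β) × (ι → γ) × (ι → δ) =>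
      ((y.1, y.2.1), fun i => (y.2.2.1 i, y.2.2.2 i)) := fun y y' hy => by
    simp_all [Prod.ext_iff, funext_iff]
  have hunzip : Function.Injective fun y : ((ι → α) × (ι → β)) × (ι → γ × δ) =>
      ((y.1.1, fun i => (y.2 i).1), (y.1.2, fun i => (y.2 i).2)) := fun y y' hy => by
    simp_all [Prod.ext_iff, funext_iff]
  have hswap : Function.Injective fun y : (α × β) × (γ × δ) => ((y.1.1, y.2.1), (y.1.2, y.2.2)) :=
    fun y y' hy => by simp_all [Prod.ext_iff]
  have hchan := ent_pair_eq_add_sum_of_memoryless hp (U := fun ω => (X ω, A ω))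
    (S := fun ω i => (E ω i, D ω i)) (φ := fun i u => (u.1 i, u.2 i))
    (k := fun _ v s => K s v.1 v.2)
    fun u s => (marg_comp_of_injective (fun ω => (X ω, A ω, E ω, D ω)) hzip
      (u.1, u.2, fun i => (s i).1, fun i => (s i).2)).trans (h _ _ _ _)
  rw [← ent_comp_of_injective (fun ω => ((X ω, A ω), fun i => (E ω i, D ω i))) hunzip] at hchan
  rw [hchan]
  congr 1
  refine Finset.sum_congr rfl fun i _ => ?_
  rw [← ent_comp_of_injective (fun ω => ((X ω i, A ω i), (E ω i, D ω i))) hswap]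

end IT

/-- converse core inequality: with `X^n` i.i.d. `P_X`, `(S_e^n,S_d^n)`
generated memorylessly from `(X^n,A^n)` via `P_{S_e,S_d|X,A}`, and `A^n` a function of `X^n`:
`H(X^n,S_e^n) − H(X^n,S_e^n|A^n) + H(X^n,S_e^n|A^n,S_d^n)
  ≥ ∑ i [I(X_i;A_i) + H(X_i,S_{e,i}|A_i,S_{d,i})]`. -/
theorem stmt12
    {Ω : Type} [Fintype Ω] {n : ℕ} {Xt At Et Dt : Type}
    [Fintype Xt] [DecidableEq Xt] [Fintype At] [DecidableEq At]
    [Fintype Et] [DecidableEq Et] [Fintype Dt] [DecidableEq Dt]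
    (p : Ω → ℝ) (hp : IT.IsProb p)
    (Xv : Ω → Fin n → Xt) (Av : Ω → Fin n → At)
    (Sev : Ω → Fin n → Et) (Sdv : Ω → Fin n → Dt)
    (PX : Xt → ℝ) (PS : Et × Dt → Xt → At → ℝ)
    (hiid : ∀ xs : Fin n → Xt, IT.marg p Xv xs = ∏ i, PX (xs i))
    (hmem : ∀ (xs : Fin n → Xt) (as_ : Fin n → At) (es : Fin n → Et) (ds : Fin n → Dt),
      IT.marg p (fun ω => (Xv ω, Av ω, Sev ω, Sdv ω)) (xs, as_, es, ds)
        = IT.marg p (fun ω => (Xv ω, Av ω)) (xs, as_)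
          * ∏ i, PS (es i, ds i) (xs i) (as_ i))
    (hA : ∃ f : (Fin n → Xt) → (Fin n → At), ∀ ω, Av ω = f (Xv ω)) :
    IT.ent p (fun ω => (Xv ω, Sev ω))
      - IT.condEnt p (fun ω => (Xv ω, Sev ω)) Av
      + IT.condEnt p (fun ω => (Xv ω, Sev ω)) (fun ω => (Av ω, Sdv ω))
    ≥ ∑ i : Fin n,
        (IT.mi p (fun ω => Xv ω i) (fun ω => Av ω i)
          + IT.condEnt p (fun ω => (Xv ω i, Sev ω i)) (fun ω => (Av ω i, Sdv ω i))) := by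
  obtain ⟨f, hf⟩ := hA
  have hXSA : IT.ent p (fun ω => ((Xv ω, Sev ω), Av ω)) = IT.ent p (fun ω => (Xv ω, Sev ω)) :=
    IT.ent_pair_eq_of_eq_comp (g := fun y => f y.1) hf
  have hXA : IT.ent p (fun ω => (Xv ω, Av ω)) = ∑ i, IT.ent p (fun ω => Xv ω i) :=
    (IT.ent_pair_eq_of_eq_comp hf).trans (IT.ent_eq_sum_ent_of_marg_eq_prod hp Xv _ hiid)
  have hchan := IT.ent_eq_add_sum_of_memoryless_channel hp.1 hmem
  have hAD := IT.ent_pair_le_add_sum hp Av Sdv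
  simp only [IT.mi, IT.condEnt, ge_iff_le, Finset.sum_add_distrib, Finset.sum_sub_distrib]
    at hchan hAD ⊢
  linarith
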